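/- Let p ∈ (0,1)^C with Σ_k p_k = 1 and let ã ~ N(a, λΣ) be a Gaussian vector in ℝ^A. Then Σ_{k=1}^C p_k · E_ã[−log(exp(w_kᵀã+b_k)/Σ_j exp(w_jᵀã+b_j))] ≤ Σ_{k=1}^C −p_k log(exp(w_kᵀa+b_k)/Σ_{j=1}^C exp(w_jᵀa+b_j+(λ/2)(w_j−w_k)ᵀΣ(w_j−w_k))). -/

import Mathlib

/-!
For each class `k`, `-log softmax_k` of the logits `wᵀã + b` equals `log ∑ⱼ exp Yⱼ` with
`Yⱼ = (wⱼ - w_k)ᵀã + (bⱼ - b_k)`, and `Yⱼ` is Gaussian with mean `(wⱼ - w_k)ᵀa + bⱼ - b_k` and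
variance `λ (wⱼ - w_k)ᵀΣ(wⱼ - w_k)`. Jensen's inequality for the concave `log` moves the
expectation inside the logarithm, where the Gaussian moment generating function
`𝔼[exp Y] = exp (μ + v / 2)` evaluates it. Weighting by `p_k ≥ 0` and summing gives the bound.
-/

open MeasureTheory ProbabilityTheory Real Matrix
open scoped NNReal

/-- A random vector `X : Ω → (Fin A → ℝ)` is multivariate Gaussian with mean `m` and
covariance matrix `S` iff every linear functional of it is a one-dimensional Gaussian
with the corresponding mean and variance (Cramér–Wold characterization). -/
def IsMvGaussian {Ω : Type*} [MeasurableSpace Ω] {A : ℕ} (P : Measure Ω)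
    (X : Ω → Fin A → ℝ) (m : Fin A → ℝ) (S : Matrix (Fin A) (Fin A) ℝ) : Prop :=
  ∀ v : Fin A → ℝ,
    P.map (fun ω => v ⬝ᵥ X ω) = gaussianReal (v ⬝ᵥ m) (Real.toNNReal (v ⬝ᵥ S.mulVec v))

lemma neg_log_exp_div_sum_exp {ι : Type*} [Fintype ι] (x : ℝ) (z : ι → ℝ) :
    -log (exp x / ∑ j, exp (z j)) = log (∑ j, exp (z j - x)) := by
  simp only [← log_inv, inv_div, Finset.sum_div, exp_sub]

section Probability

variable {Ω : Type*} [MeasurableSpace Ω] {P : Measure Ω}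

lemma IsMvGaussian.map_dotProduct_add {A : ℕ} {X : Ω → Fin A → ℝ} {m : Fin A → ℝ}
    {S : Matrix (Fin A) (Fin A) ℝ} (hX : IsMvGaussian P X m S) (v : Fin A → ℝ) (c : ℝ) :
    P.map (fun ω => v ⬝ᵥ X ω + c) =
      gaussianReal (v ⬝ᵥ m + c) (Real.toNNReal (v ⬝ᵥ S.mulVec v)) := by
  have hmeas : AEMeasurable (fun ω => v ⬝ᵥ X ω) P :=
    aemeasurable_of_map_neZero (by rw [hX v]; infer_instance)
  rw [← gaussianReal_map_add_const, ← hX v,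
    AEMeasurable.map_map_of_aemeasurable (measurable_add_const c).aemeasurable hmeas]
  rfl

variable [IsProbabilityMeasure P]

lemma integral_log_le_log_integral {f : Ω → ℝ} (hf : Integrable f P)
    (h1 : ∀ᵐ ω ∂P, 1 ≤ f ω) : ∫ ω, log (f ω) ∂P ≤ log (∫ ω, f ω ∂P) := by
  have hlog : Integrable (log ∘ f) P := by
    refine hf.mono' (measurable_log.comp_aemeasurable hf.aemeasurable).aestronglyMeasurable ?_
    filter_upwards [h1] with ω hω
    rw [Function.comp_apply, norm_of_nonneg (log_nonneg hω)]
    exact (log_le_sub_one_of_pos (by linarith)).trans (by linarith)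
  have hpos : Set.Ici (1 : ℝ) ⊆ Set.Ioi 0 := Set.Ici_subset_Ioi.mpr one_pos
  have hconcave : ConcaveOn ℝ (Set.Ici 1) log :=
    strictConcaveOn_log_Ioi.concaveOn.subset hpos (convex_Ici 1)
  have hcont : ContinuousOn log (Set.Ici 1) :=
    continuousOn_log.mono fun x hx => (hpos hx).ne'
  exact hconcave.le_map_integral hcont isClosed_Ici h1 hf hlog

lemma integrable_exp_and_integral_exp_of_map_eq_gaussianReal {Y : Ω → ℝ} {μ : ℝ} {v : ℝ≥0}
    (hY : P.map Y = gaussianReal μ v) :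
    Integrable (fun ω => exp (Y ω)) P ∧ ∫ ω, exp (Y ω) ∂P = exp (μ + v / 2) := by
  have hmgf := mgf_gaussianReal hY 1
  have hint : Integrable (fun ω => exp (1 * Y ω)) P := mgf_pos_iff.mp (hmgf ▸ exp_pos _)
  exact ⟨by simpa only [one_mul] using hint, by simpa [mgf] using hmgf⟩

lemma integral_log_sum_exp_le_of_gaussian {ι : Type*} [Fintype ι] {Y : ι → Ω → ℝ}
    {μ : ι → ℝ} {v : ι → ℝ≥0} (hY : ∀ j, P.map (Y j) = gaussianReal (μ j) (v j))
    (h1 : ∀ᵐ ω ∂P, 1 ≤ ∑ j, exp (Y j ω)) :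
    ∫ ω, log (∑ j, exp (Y j ω)) ∂P ≤ log (∑ j, exp (μ j + v j / 2)) := by
  have hexp j := integrable_exp_and_integral_exp_of_map_eq_gaussianReal (hY j)
  calc ∫ ω, log (∑ j, exp (Y j ω)) ∂P
      ≤ log (∫ ω, ∑ j, exp (Y j ω) ∂P) :=
        integral_log_le_log_integral (integrable_finsetSum _ fun j _ => (hexp j).1) h1
    _ = log (∑ j, exp (μ j + v j / 2)) := by
        rw [integral_finsetSum _ fun j _ => (hexp j).1]
        simp only [fun j => (hexp j).2]

lemma integral_neg_log_softmax_le {A C : ℕ} {X : Ω → Fin A → ℝ} {a : Fin A → ℝ}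
    {Sig : Matrix (Fin A) (Fin A) ℝ} {lam : ℝ} (hlam : 0 ≤ lam) (hSig : Sig.PosSemidef)
    (hX : IsMvGaussian P X a (lam • Sig)) (w : Fin C → Fin A → ℝ) (b : Fin C → ℝ) (k : Fin C) :
    ∫ ω, -log (exp (w k ⬝ᵥ X ω + b k) / ∑ j, exp (w j ⬝ᵥ X ω + b j)) ∂P ≤
      -log (exp (w k ⬝ᵥ a + b k) /
        ∑ j, exp (w j ⬝ᵥ a + b j + lam / 2 * ((w j - w k) ⬝ᵥ Sig.mulVec (w j - w k)))) := by
  have hvar j : (Real.toNNReal ((w j - w k) ⬝ᵥ (lam • Sig).mulVec (w j - w k)) : ℝ) =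
      lam * ((w j - w k) ⬝ᵥ Sig.mulVec (w j - w k)) := by
    have hq : 0 ≤ (w j - w k) ⬝ᵥ Sig.mulVec (w j - w k) := by
      simpa using hSig.dotProduct_mulVec_nonneg (w j - w k)
    rw [smul_mulVec, dotProduct_smul, smul_eq_mul, Real.coe_toNNReal _ (mul_nonneg hlam hq)]
  have hlaw j := hX.map_dotProduct_add (w j - w k) (b j - b k)
  -- the `j = k` summand is `exp 0 = 1`
  have h1 : ∀ᵐ ω ∂P, 1 ≤ ∑ j, exp ((w j - w k) ⬝ᵥ X ω + (b j - b k)) :=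
    .of_forall fun ω => by
      simpa using Finset.single_le_sum (fun j _ => (exp_pos
        ((w j - w k) ⬝ᵥ X ω + (b j - b k))).le) (Finset.mem_univ k)
  convert integral_log_sum_exp_le_of_gaussian hlaw h1 using 1
  · simp only [neg_log_exp_div_sum_exp]
    congr! 5
    simp only [sub_dotProduct]
    ring
  · rw [neg_log_exp_div_sum_exp]
    simp only [hvar]
    congr! 3
    simp only [sub_dotProduct]
    ring

end Probability

theorem isda_semi_supervised_upper_bound_general {Ω : Type*} [MeasurableSpace Ω] {A C : ℕ}
    (P : Measure Ω) [IsProbabilityMeasure P] (X : Ω → Fin A → ℝ) (a : Fin A → ℝ)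
    (Sig : Matrix (Fin A) (Fin A) ℝ) (lam : ℝ) (hlam : 0 ≤ lam) (hSig : Sig.PosSemidef)
    (hX : IsMvGaussian P X a (lam • Sig))
    (w : Fin C → Fin A → ℝ) (b : Fin C → ℝ)
    (p : Fin C → ℝ) (hp0 : ∀ k, 0 < p k) :
    ∑ k, p k * ∫ ω,
        -Real.log (Real.exp (w k ⬝ᵥ X ω + b k) / ∑ j, Real.exp (w j ⬝ᵥ X ω + b j)) ∂P ≤
      ∑ k, -(p k) * Real.log (Real.exp (w k ⬝ᵥ a + b k) /
        ∑ j, Real.exp (w j ⬝ᵥ a + b j +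
          lam / 2 * ((w j - w k) ⬝ᵥ Sig.mulVec (w j - w k)))) := by
  refine Finset.sum_le_sum fun k _ => ?_
  rw [neg_mul, ← mul_neg]
  exact mul_le_mul_of_nonneg_left
    (integral_neg_log_softmax_le hlam hSig hX w b k) (hp0 k).le

/-- **Proposition 2 of the paper.** For a probability vector `p ∈ (0,1)^C`
and `ã ~ N(a, λΣ)`, the expected soft-label cross-entropy is upper bounded by the
semi-supervised ISDA surrogate loss. -/
theorem isda_semi_supervised_upper_bound {Ω : Type*} [MeasurableSpace Ω] {A C : ℕ}
    (P : Measure Ω) [IsProbabilityMeasure P] (X : Ω → Fin A → ℝ) (a : Fin A → ℝ)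
    (Sig : Matrix (Fin A) (Fin A) ℝ) (lam : ℝ) (hlam : 0 ≤ lam) (hSig : Sig.PosSemidef)
    (hX : IsMvGaussian P X a (lam • Sig))
    (w : Fin C → Fin A → ℝ) (b : Fin C → ℝ)
    (p : Fin C → ℝ) (hp0 : ∀ k, 0 < p k) (hp1 : ∀ k, p k < 1) (hp : ∑ k, p k = 1) :
    ∑ k, p k * ∫ ω,
        -Real.log (Real.exp (w k ⬝ᵥ X ω + b k) / ∑ j, Real.exp (w j ⬝ᵥ X ω + b j)) ∂P ≤
      ∑ k, -(p k) * Real.log (Real.exp (w k ⬝ᵥ a + b k) /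
        ∑ j, Real.exp (w j ⬝ᵥ a + b j +
          lam / 2 * ((w j - w k) ⬝ᵥ Sig.mulVec (w j - w k)))) :=
  isda_semi_supervised_upper_bound_general P X a Sig lam hlam hSig hX w b p hp0
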